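/- arXiv:2004.08127 — 2 statements merged into one kernel-verified Lean document; each statement's English description precedes it below -/
import Mathlib

section
/- For real numbers u_r, u_s and positive reals d_r, d_s, the function t ↦ max(|t - u_r| / d_r, |t - u_s| / d_s) attains its unique minimum at t* = (d_s · u_r + d_r · u_s) / (d_r + d_s), and the minimum value equals |u_r - u_s| / (d_r + d_s). -/
/-!
The triangle inequality `|uᵣ - uₛ| ≤ |t - uᵣ| + |t - uₛ| ≤ c (dᵣ + dₛ)`, with `c` the maximum at `t`,
gives the lower bound. At the weighted mean `t*` both quotients equal `|uᵣ - uₛ| / (dᵣ + dₛ)`.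
If the maximum at `t` attains the bound, the triangle inequality is an equality with both
quotients at the bound, which pins `t - uᵣ` down to `dᵣ (uₛ - uᵣ) / (dᵣ + dₛ)`.
-/

section

variable {a b p q : ℝ}

theorem abs_sub_div_add_le_max (hp : 0 < p) (hq : 0 < q) (t : ℝ) :
    |a - b| / (p + q) ≤ max (|t - a| / p) (|t - b| / q) := by
  set c := max (|t - a| / p) (|t - b| / q)
  have hta : |t - a| ≤ c * p := (div_le_iff₀ hp).mp (le_max_left _ _)
  have htb : |t - b| ≤ c * q := (div_le_iff₀ hq).mp (le_max_right _ _)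
  rw [div_le_iff₀ (add_pos hp hq)]
  calc |a - b| ≤ |a - t| + |t - b| := abs_sub_le a t b
    _ = |t - a| + |t - b| := by rw [abs_sub_comm a t]
    _ ≤ c * (p + q) := by linarith

theorem abs_weightedMean_sub_div (hp : 0 < p) (hq : 0 < q) :
    |(q * a + p * b) / (p + q) - a| / p = |a - b| / (p + q) := by
  have hpq : 0 < p + q := add_pos hp hq
  have hmean : (q * a + p * b) / (p + q) - a = p * (b - a) / (p + q) := by
    field_simp
    ring
  rw [hmean, abs_div, abs_mul, abs_of_pos hp, abs_of_pos hpq, abs_sub_comm b a]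
  field_simp

theorem eq_weightedMean_of_max_le (hp : 0 < p) (hq : 0 < q) {t : ℝ}
    (ht : max (|t - a| / p) (|t - b| / q) ≤ |a - b| / (p + q)) :
    t = (q * a + p * b) / (p + q) := by
  have hpq : 0 < p + q := add_pos hp hq
  set M := |a - b| / (p + q)
  have hab : |a - b| = M * (p + q) := (div_mul_cancel₀ _ hpq.ne').symm
  have hta : |t - a| ≤ M * p := (div_le_iff₀ hp).mp ((le_max_left _ _).trans ht)
  have htb : |t - b| ≤ M * q := (div_le_iff₀ hq).mp ((le_max_right _ _).trans ht)
  rw [abs_le] at hta htb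
  rw [eq_div_iff hpq.ne']
  rcases le_total a b with h | h
  · rw [abs_of_nonpos (sub_nonpos.mpr h)] at hab
    have hta_eq : t - a = M * p := by linarith
    linear_combination (p + q) * hta_eq - p * hab
  · rw [abs_of_nonneg (sub_nonneg.mpr h)] at hab
    have hta_eq : a - t = M * p := by linarith
    linear_combination -(p + q) * hta_eq + p * hab

end

/-- Oberman's lemma: `t ↦ max (|t - uᵣ|/dᵣ) (|t - uₛ|/dₛ)` attains its unique
minimum at `t* = (dₛuᵣ + dᵣuₛ)/(dᵣ + dₛ)`, with value `|uᵣ - uₛ|/(dᵣ + dₛ)`. -/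
theorem stmt_7 (ur us dr ds : ℝ) (hdr : 0 < dr) (hds : 0 < ds) :
    max (|(ds * ur + dr * us) / (dr + ds) - ur| / dr)
        (|(ds * ur + dr * us) / (dr + ds) - us| / ds) = |ur - us| / (dr + ds) ∧
    ∀ t : ℝ,
      |ur - us| / (dr + ds) ≤ max (|t - ur| / dr) (|t - us| / ds) ∧
      (max (|t - ur| / dr) (|t - us| / ds) = |ur - us| / (dr + ds) →
        t = (ds * ur + dr * us) / (dr + ds)) := by
  have hmean_r := abs_weightedMean_sub_div (a := ur) (b := us) hdr hds
  have hmean_s := abs_weightedMean_sub_div (a := us) (b := ur) hds hdr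
  rw [add_comm ds dr, add_comm (dr * us), abs_sub_comm us ur] at hmean_s
  refine ⟨by rw [hmean_r, hmean_s, max_self], fun t => ⟨abs_sub_div_add_le_max hdr hds t,
    fun h => eq_weightedMean_of_max_le hdr hds h.le⟩⟩
end

section
/- Let Ω ⊆ ℝⁿ be open, bounded, and nonempty. The distance function d(x) = dist(x, ∂Ω) restricted to Ω (extended by 0 outside) is 1-Lipschitz, vanishes on ∂Ω, and satisfies ‖d‖_∞ = max_{x∈Ω̄} dist(x, ∂Ω). Consequently d realizes the infimum Λ₁ = inf ‖∇φ‖_∞/‖φ‖_∞ over nonzero Lipschitz functions vanishing on ∂Ω, and Λ₁ = 1 / max_{x∈Ω} dist(x, ∂Ω). -/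
/-!
A function that is `L`-Lipschitz and vanishes on `∂Ω` satisfies `|φ x| ≤ L · dist(x, ∂Ω)`, so
`‖φ‖_∞ ≤ L · ‖d‖_∞` and every quotient `L / ‖φ‖_∞` is at least `1 / ‖d‖_∞`. The distance function
`d` itself is `1`-Lipschitz and, on a nonempty open `Ω`, positive somewhere, so it attains this
bound. When `∂Ω` is empty (e.g. in `ℝ⁰`) the bound `1 / 0 = 0` is attained by a constant.
-/

open Metric

section LipschitzQuotients

variable {α : Type*} [PseudoMetricSpace α]

/-- The quotients `L / ‖φ‖_∞` whose infimum over nonzero Lipschitz functions vanishing on `∂Ω`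
is `Λ₁(Ω)`. -/
def lipschitzQuotients (Ω : Set α) : Set ℝ :=
  {r | ∃ (L : ℝ) (φ : α → ℝ), 0 ≤ L ∧
    (∀ x y, |φ x - φ y| ≤ L * dist x y) ∧
    (∀ x ∈ frontier Ω, φ x = 0) ∧
    (∃ x ∈ Ω, φ x ≠ 0) ∧
    r = L / ⨆ x : Ω, |φ x.1|}

theorem abs_le_mul_infDist_of_abs_sub_le {φ : α → ℝ} {L : ℝ} {s : Set α} (hs : s.Nonempty)
    (hL : 0 ≤ L) (hφ : ∀ x y, |φ x - φ y| ≤ L * dist x y) (hvan : ∀ y ∈ s, φ y = 0) (x : α) :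
    |φ x| ≤ L * infDist x s := by
  have : Nonempty s := hs.to_subtype
  rw [infDist_eq_iInf, Real.mul_iInf_of_nonneg hL]
  exact le_ciInf fun y => by simpa [hvan y y.2] using hφ x y

theorem bddAbove_range_infDist {Ω : Set α} (hbdd : Bornology.IsBounded Ω) (s : Set α) :
    BddAbove (Set.range fun x : Ω => infDist x.1 s) := by
  have := ((lipschitz_infDist_pt s).isBounded_image hbdd).bddAbove
  rwa [Set.image_eq_range] at this

theorem infDist_frontier_pos {Ω : Set α} (hopen : IsOpen Ω) (hF : (frontier Ω).Nonempty)
    {x : α} (hx : x ∈ Ω) : 0 < infDist x (frontier Ω) :=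
  (isClosed_frontier.notMem_iff_infDist_pos hF).1 fun hxF => (hopen.frontier_eq ▸ hxF).2 hx

theorem iSup_abs_le_mul_iSup_infDist {Ω s : Set α} [Nonempty Ω]
    (hd : BddAbove (Set.range fun x : Ω => infDist x.1 s)) (hs : s.Nonempty)
    {φ : α → ℝ} {L : ℝ} (hL : 0 ≤ L) (hφ : ∀ x y, |φ x - φ y| ≤ L * dist x y)
    (hvan : ∀ y ∈ s, φ y = 0) :
    BddAbove (Set.range fun x : Ω => |φ x.1|) ∧
      ⨆ x : Ω, |φ x.1| ≤ L * ⨆ x : Ω, infDist x.1 s := by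
  have hle (x : Ω) : |φ x.1| ≤ L * ⨆ x : Ω, infDist x.1 s :=
    (abs_le_mul_infDist_of_abs_sub_le hs hL hφ hvan x).trans
      (mul_le_mul_of_nonneg_left (le_ciSup hd x) hL)
  exact ⟨⟨_, Set.forall_mem_range.2 hle⟩, ciSup_le hle⟩

theorem one_div_iSup_infDist_mem_lowerBounds {Ω : Set α} (hbdd : Bornology.IsBounded Ω) :
    1 / ⨆ x : Ω, infDist x.1 (frontier Ω) ∈ lowerBounds (lipschitzQuotients Ω) := by
  rintro _ ⟨L, φ, hL, hφ, hvan, ⟨z, hz, hz0⟩, rfl⟩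
  have : Nonempty Ω := ⟨⟨z, hz⟩⟩
  rcases (frontier Ω).eq_empty_or_nonempty with hF | hF
  · simp only [hF, infDist_empty, Real.iSup_const_zero, div_zero]
    exact div_nonneg hL (Real.iSup_nonneg fun _ => abs_nonneg _)
  obtain ⟨hbddφ, hle⟩ := iSup_abs_le_mul_iSup_infDist (bddAbove_range_infDist hbdd _) hF hL hφ hvan
  have hSpos : 0 < ⨆ x : Ω, |φ x.1| := (abs_pos.2 hz0).trans_le (le_ciSup hbddφ ⟨z, hz⟩)
  have hMpos : 0 < ⨆ x : Ω, infDist x.1 (frontier Ω) :=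
    pos_of_mul_pos_right (hSpos.trans_le hle) hL
  rwa [div_le_div_iff₀ hMpos hSpos, one_mul]

theorem one_div_iSup_infDist_mem_lipschitzQuotients {Ω : Set α} (hopen : IsOpen Ω)
    (hne : Ω.Nonempty) :
    1 / ⨆ x : Ω, infDist x.1 (frontier Ω) ∈ lipschitzQuotients Ω := by
  obtain ⟨x₀, hx₀⟩ := hne
  rcases (frontier Ω).eq_empty_or_nonempty with hF | hF
  · refine ⟨0, fun _ => 1, le_rfl, by simp, by simp [hF], ⟨x₀, hx₀, one_ne_zero⟩, ?_⟩
    simp [hF]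
  refine ⟨1, fun x => infDist x (frontier Ω), zero_le_one, fun x y => ?_,
    fun x hx => infDist_zero_of_mem hx, ⟨x₀, hx₀, (infDist_frontier_pos hopen hF hx₀).ne'⟩, ?_⟩
  · simpa [Real.dist_eq] using (lipschitz_infDist_pt (frontier Ω)).dist_le_mul x y
  · simp only [abs_of_nonneg infDist_nonneg]

theorem isLeast_lipschitzQuotients {Ω : Set α} (hopen : IsOpen Ω)
    (hbdd : Bornology.IsBounded Ω) (hne : Ω.Nonempty) :
    IsLeast (lipschitzQuotients Ω) (1 / ⨆ x : Ω, infDist x.1 (frontier Ω)) :=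
  ⟨one_div_iSup_infDist_mem_lipschitzQuotients hopen hne,
    one_div_iSup_infDist_mem_lowerBounds hbdd⟩

end LipschitzQuotients

/-- The distance function `d(x) = dist(x, ∂Ω)` is 1-Lipschitz, vanishes on `∂Ω`,
attains its maximum on `Ω̄`, and realizes the infimum
`Λ₁ = inf Lip(φ)/‖φ‖_∞ = 1 / max_{x ∈ Ω} dist(x, ∂Ω)` over nonzero Lipschitz
functions vanishing on `∂Ω`. -/
theorem stmt_12 (n : ℕ) (Ω : Set (EuclideanSpace ℝ (Fin n)))
    (hopen : IsOpen Ω) (hbdd : Bornology.IsBounded Ω) (hne : Ω.Nonempty) :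
    LipschitzWith 1 (fun x => infDist x (frontier Ω)) ∧
    (∀ x ∈ frontier Ω, infDist x (frontier Ω) = 0) ∧
    (∃ x ∈ closure Ω, ∀ y ∈ closure Ω,
      infDist y (frontier Ω) ≤ infDist x (frontier Ω)) ∧
    IsGLB {r : ℝ | ∃ (L : ℝ) (φ : EuclideanSpace ℝ (Fin n) → ℝ), 0 ≤ L ∧
        (∀ x y, |φ x - φ y| ≤ L * dist x y) ∧
        (∀ x ∈ frontier Ω, φ x = 0) ∧
        (∃ x ∈ Ω, φ x ≠ 0) ∧
        r = L / ⨆ x : Ω, |φ x.1|}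
      (1 / ⨆ x : Ω, infDist x.1 (frontier Ω)) := by
  refine ⟨lipschitz_infDist_pt _, fun x hx => infDist_zero_of_mem hx, ?_,
    (isLeast_lipschitzQuotients hopen hbdd hne).isGLB⟩
  obtain ⟨x, hx, hmax⟩ := hbdd.isCompact_closure.exists_isMaxOn (hne.mono subset_closure)
    (continuous_infDist_pt (frontier Ω)).continuousOn
  exact ⟨x, hx, hmax⟩
end
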